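/- Let ε ≥ 0, κ ≥ 0, c ∈ ℝ³, and let τ, σ ⊂ ℝ³ be axis-parallel boxes with dist(τ,σ) > 0. Suppose that for all d, p ∈ ℝ³ satisfying 2‖p‖ ≤ max{diam τ, diam σ} and d − tp ∈ τ−σ := {x−y : x ∈ τ, y ∈ σ} for all t ∈ [−1,1], the univariate interpolation error satisfies ‖g_dp − 𝕀[g_dp]‖_{∞,[−1,1]} ≤ ε, where g_dp(t) := exp(iκ(‖d−tp‖ − ⟨d−tp, c⟩))/(4π‖d−tp‖). Then the directional approximation error satisfies ‖g − g̃_{τσ}‖_{∞,τ×σ} ≤ 6 Λ_m⁵ ε. -/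

import Mathlib

open Complex Set

/-- The Euclidean norm on `ℝⁿ`. -/
noncomputable def euclNorm {n : ℕ} (x : Fin n → ℝ) : ℝ := Real.sqrt (∑ j, (x j) ^ 2)

/-- The axis-parallel box `[a₁,b₁] × ⋯ × [a_n,b_n]`. -/
def boxSet {n : ℕ} (a b : Fin n → ℝ) : Set (Fin n → ℝ) := {x | ∀ ι, x ι ∈ Set.Icc (a ι) (b ι)}

/-- The Euclidean diameter of a set. -/
noncomputable def euclDiam {n : ℕ} (s : Set (Fin n → ℝ)) : ℝ :=
  sSup {r : ℝ | ∃ x ∈ s, ∃ y ∈ s, r = euclNorm (x - y)}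

/-- The Euclidean distance between two sets. -/
noncomputable def euclSetDist {n : ℕ} (s t : Set (Fin n → ℝ)) : ℝ :=
  sInf {r : ℝ | ∃ x ∈ s, ∃ y ∈ t, r = euclNorm (x - y)}

/-- Lagrange polynomial `L_ν(z) = ∏_{μ≠ν} (z−ξ_μ)/(ξ_ν−ξ_μ)` for nodes `ξ` on `[−1,1]`. -/
noncomputable def lagrangeC {m : ℕ} (ξ : Fin (m + 1) → ℝ) (ν : Fin (m + 1)) (z : ℂ) : ℂ :=
  ∏ μ ∈ Finset.univ.erase ν, (z - (ξ μ : ℂ)) / ((ξ ν : ℂ) - (ξ μ : ℂ))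

/-- Interpolation operator `𝕀[f] = Σ_ν f(ξ_ν)·L_ν` on `[−1,1]`. -/
noncomputable def interpC {m : ℕ} (ξ : Fin (m + 1) → ℝ) (f : ℝ → ℂ) (x : ℝ) : ℂ :=
  ∑ ν, f (ξ ν) * lagrangeC ξ ν (x : ℂ)

/-- The maximum norm `‖f‖_{∞,s}` of a function on a set. -/
noncomputable def supNormOn (f : ℝ → ℂ) (s : Set ℝ) : ℝ :=
  sSup ((fun x => ‖f x‖) '' s)

/-- The Lebesgue constant `Λ_m = sup{‖𝕀[f]‖_{∞,[−1,1]}/‖f‖_{∞,[−1,1]} : f ∈ C[−1,1] \ {0}}`. -/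
noncomputable def lebesgueConst {m : ℕ} (ξ : Fin (m + 1) → ℝ) : ℝ :=
  sSup {r : ℝ | ∃ f : ℝ → ℂ, ContinuousOn f (Set.Icc (-1) 1) ∧
    (∃ x ∈ Set.Icc (-1 : ℝ) 1, f x ≠ 0) ∧
    r = supNormOn (interpC ξ f) (Set.Icc (-1) 1) / supNormOn f (Set.Icc (-1) 1)}

/-- The affine map `Φ_{[a,b]}(t) = (b+a)/2 + (b−a)/2·t` taking `[−1,1]` to `[a,b]`. -/
noncomputable def phiAB (a b t : ℝ) : ℝ := (b + a) / 2 + (b - a) / 2 * t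

/-- The inverse `Φ_{[a,b]}^{−1}(x) = (2x − a − b)/(b − a)`. -/
noncomputable def phiInvAB (a b x : ℝ) : ℝ := (2 * x - (a + b)) / (b - a)

/-- Transformed tensor interpolation point `ξ_{B,ν}` of the box `[a₁,b₁]×⋯×[a_n,b_n]`. -/
noncomputable def xiPoint {n m : ℕ} (ξ : Fin (m + 1) → ℝ) (a b : Fin n → ℝ)
    (ν : Fin n → Fin (m + 1)) : Fin n → ℝ :=
  fun ι => phiAB (a ι) (b ι) (ξ (ν ι))

/-- Transformed tensor Lagrange function `L_{B,ν}(x) = ∏_ι L_{ν_ι}(Φ_{[a_ι,b_ι]}^{−1}(x_ι))`. -/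
noncomputable def lagTensor {n m : ℕ} (ξ : Fin (m + 1) → ℝ) (a b : Fin n → ℝ)
    (ν : Fin n → Fin (m + 1)) (x : Fin n → ℝ) : ℂ :=
  ∏ ι, lagrangeC ξ (ν ι) ((phiInvAB (a ι) (b ι) (x ι) : ℝ) : ℂ)

/-- The 3D Helmholtz kernel `g(x,y) = exp(iκ‖x−y‖)/(4π‖x−y‖)`. -/
noncomputable def helmholtz3D (κ : ℝ) (x y : Fin 3 → ℝ) : ℂ :=
  Complex.exp (Complex.I * (κ : ℂ) * (euclNorm (x - y) : ℂ)) /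
    (4 * (Real.pi : ℂ) * (euclNorm (x - y) : ℂ))

/-- The directionally modified kernel `g_c(x,y) = g(x,y)·exp(−iκ⟨x−y,c⟩)`. -/
noncomputable def helmholtz3Dc (κ : ℝ) (c : Fin 3 → ℝ) (x y : Fin 3 → ℝ) : ℂ :=
  helmholtz3D κ x y * Complex.exp (-(Complex.I * (κ : ℂ) * ((∑ j, (x j - y j) * c j : ℝ) : ℂ)))

/-- The directional approximation
`g̃_{τσ}(x,y) = exp(iκ⟨x−y,c⟩)·𝕀_{τ×σ}[g_c](x,y)` with tensor interpolation on `τ×σ`. -/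
noncomputable def gTilde (m : ℕ) (ξ : Fin (m + 1) → ℝ) (κ : ℝ) (c : Fin 3 → ℝ)
    (aτ bτ aσ bσ : Fin 3 → ℝ) (x y : Fin 3 → ℝ) : ℂ :=
  Complex.exp (Complex.I * (κ : ℂ) * ((∑ j, (x j - y j) * c j : ℝ) : ℂ)) *
    ∑ ν : Fin 3 → Fin (m + 1), ∑ μ : Fin 3 → Fin (m + 1),
      helmholtz3Dc κ c (xiPoint ξ aτ bτ ν) (xiPoint ξ aσ bσ μ) *
        lagTensor ξ aτ bτ ν x * lagTensor ξ aσ bσ μ y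

/-!
The directional kernel `g_c(x,y) = g(x,y)·exp(−iκ⟨x−y,c⟩)` depends only on `x − y`, and on every
coordinate line of `τ` or `σ` it is one of the univariate functions `g_dp`, with `p` half an edge
of the box (so `2‖p‖ ≤ diam`). Tensor interpolation in `n + 1` variables is univariate
interpolation of tensor interpolation in `n` of them, so splitting off one variable at a time
and using `‖𝕀[f]‖ ≤ Λ_m ‖f‖` bounds the error on an `n`-dimensional box by
`(1 + Λ_m + ⋯ + Λ_m^{n-1}) ε`.
For the six variables of `τ × σ` this is at most `6 Λ_m⁵ ε`, and the plane wave `exp(iκ⟨x−y,c⟩)`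
in front of `g̃_{τσ}` has modulus one.
-/

open Function

section Univariate
variable {m : ℕ} (ξ : Fin (m + 1) → ℝ)

lemma lagrangeC_eq_eval (ν : Fin (m + 1)) (z : ℂ) :
    lagrangeC ξ ν z = (Lagrange.basis Finset.univ (fun μ => (ξ μ : ℂ)) ν).eval z := by
  rw [Lagrange.basis, Polynomial.eval_prod, lagrangeC]
  refine Finset.prod_congr rfl fun μ _ => ?_
  simp [Lagrange.basisDivisor, div_eq_inv_mul]

lemma sum_lagrangeC (hinj : Injective ξ) (z : ℂ) : ∑ ν, lagrangeC ξ ν z = 1 := by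
  have hinj' : Set.InjOn (fun μ => (ξ μ : ℂ)) (Finset.univ : Finset (Fin (m + 1))) :=
    fun a _ b _ h => hinj (Complex.ofReal_injective h)
  simp_rw [lagrangeC_eq_eval, ← Polynomial.eval_finsetSum,
    Lagrange.sum_basis hinj' ⟨0, Finset.mem_univ 0⟩, Polynomial.eval_one]

lemma continuous_lagrangeC (ν : Fin (m + 1)) : Continuous fun t : ℝ => lagrangeC ξ ν t :=
  continuous_finsetProd _ fun _ _ => (Complex.continuous_ofReal.sub continuous_const).div_const _

lemma continuous_interpC (f : ℝ → ℂ) : Continuous (interpC ξ f) :=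
  continuous_finsetSum _ fun ν _ => continuous_const.mul (continuous_lagrangeC ξ ν)

lemma interpC_sub (f g : ℝ → ℂ) (x : ℝ) :
    interpC ξ (fun t => f t - g t) x = interpC ξ f x - interpC ξ g x := by
  simp only [interpC, ← Finset.sum_sub_distrib, sub_mul]

end Univariate

section SupNorm
variable {f : ℝ → ℂ} {s : Set ℝ}

lemma norm_le_supNormOn (hs : IsCompact s) (hf : ContinuousOn f s) {t : ℝ} (ht : t ∈ s) :
    ‖f t‖ ≤ supNormOn f s :=
  le_csSup (hs.image_of_continuousOn hf.norm).bddAbove ⟨t, ht, rfl⟩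

lemma supNormOn_le {M : ℝ} (hM : 0 ≤ M) (h : ∀ t ∈ s, ‖f t‖ ≤ M) : supNormOn f s ≤ M :=
  Real.sSup_le (by rintro _ ⟨t, ht, rfl⟩; exact h t ht) hM

lemma supNormOn_nonneg (f : ℝ → ℂ) (s : Set ℝ) : 0 ≤ supNormOn f s :=
  Real.sSup_nonneg (by rintro _ ⟨t, -, rfl⟩; exact norm_nonneg _)

lemma supNormOn_pos (hs : IsCompact s) (hf : ContinuousOn f s) (hne : ∃ x ∈ s, f x ≠ 0) :
    0 < supNormOn f s := by
  obtain ⟨x, hx, hfx⟩ := hne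
  exact (norm_pos_iff.mpr hfx).trans_le (norm_le_supNormOn hs hf hx)

end SupNorm

section Lebesgue
variable {m : ℕ} (ξ : Fin (m + 1) → ℝ)

lemma supNormOn_interpC_le (hξ : ∀ ν, ξ ν ∈ Icc (-1 : ℝ) 1) {f : ℝ → ℂ}
    (hf : ContinuousOn f (Icc (-1) 1)) :
    supNormOn (interpC ξ f) (Icc (-1) 1) ≤
      (∑ ν, supNormOn (fun t : ℝ => lagrangeC ξ ν t) (Icc (-1) 1)) * supNormOn f (Icc (-1) 1) := by
  refine supNormOn_le (mul_nonneg (Finset.sum_nonneg fun ν _ => supNormOn_nonneg _ _)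
    (supNormOn_nonneg _ _)) fun t ht => ?_
  rw [Finset.sum_mul]
  refine (norm_sum_le _ _).trans (Finset.sum_le_sum fun ν _ => ?_)
  rw [norm_mul, mul_comm]
  exact mul_le_mul (norm_le_supNormOn isCompact_Icc (continuous_lagrangeC ξ ν).continuousOn ht)
    (norm_le_supNormOn isCompact_Icc hf (hξ ν)) (norm_nonneg _) (supNormOn_nonneg _ _)

lemma supNormOn_interpC_le_lebesgueConst_mul (hξ : ∀ ν, ξ ν ∈ Icc (-1 : ℝ) 1) {f : ℝ → ℂ}
    (hf : ContinuousOn f (Icc (-1) 1)) (hne : ∃ x ∈ Icc (-1 : ℝ) 1, f x ≠ 0) :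
    supNormOn (interpC ξ f) (Icc (-1) 1) ≤ lebesgueConst ξ * supNormOn f (Icc (-1) 1) := by
  rw [← div_le_iff₀ (supNormOn_pos isCompact_Icc hf hne)]
  -- `Σ_ν ‖L_ν‖_∞` bounds every ratio, so the `sSup` defining `Λ_m` is not the junk value `0`
  refine le_csSup ⟨∑ ν, supNormOn (fun t : ℝ => lagrangeC ξ ν t) (Icc (-1) 1), ?_⟩
    ⟨f, hf, hne, rfl⟩
  rintro _ ⟨g, hg, hgne, rfl⟩
  rw [div_le_iff₀ (supNormOn_pos isCompact_Icc hg hgne)]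
  exact supNormOn_interpC_le ξ hξ hg

lemma lebesgueConst_nonneg : 0 ≤ lebesgueConst ξ :=
  Real.sSup_nonneg (by
    rintro _ ⟨f, -, -, rfl⟩
    exact div_nonneg (supNormOn_nonneg _ _) (supNormOn_nonneg _ _))

lemma one_le_lebesgueConst (hξ : ∀ ν, ξ ν ∈ Icc (-1 : ℝ) 1) (hinj : Injective ξ) :
    1 ≤ lebesgueConst ξ := by
  have hinterp : interpC ξ (fun _ => 1) = fun _ => 1 := by
    funext t
    simp [interpC, sum_lagrangeC ξ hinj]
  have hsup : supNormOn (fun _ => (1 : ℂ)) (Icc (-1) 1) = 1 := by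
    rw [supNormOn, norm_one, (nonempty_Icc.mpr (by norm_num)).image_const, csSup_singleton]
  simpa [hinterp, hsup] using supNormOn_interpC_le_lebesgueConst_mul ξ hξ
    (f := fun _ => 1) continuousOn_const ⟨0, by norm_num, one_ne_zero⟩

lemma norm_interpC_le (hξ : ∀ ν, ξ ν ∈ Icc (-1 : ℝ) 1) {f : ℝ → ℂ}
    (hf : ContinuousOn f (Icc (-1) 1)) {M : ℝ} (hfM : ∀ t ∈ Icc (-1 : ℝ) 1, ‖f t‖ ≤ M)
    {s : ℝ} (hs : s ∈ Icc (-1 : ℝ) 1) :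
    ‖interpC ξ f s‖ ≤ lebesgueConst ξ * M := by
  have hM : 0 ≤ M := (norm_nonneg _).trans (hfM 0 (by norm_num))
  by_cases hne : ∃ x ∈ Icc (-1 : ℝ) 1, f x ≠ 0
  · calc ‖interpC ξ f s‖ ≤ supNormOn (interpC ξ f) (Icc (-1) 1) :=
          norm_le_supNormOn isCompact_Icc (continuous_interpC ξ f).continuousOn hs
      _ ≤ lebesgueConst ξ * supNormOn f (Icc (-1) 1) :=
          supNormOn_interpC_le_lebesgueConst_mul ξ hξ hf hne
      _ ≤ lebesgueConst ξ * M :=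
          mul_le_mul_of_nonneg_left (supNormOn_le hM hfM) (lebesgueConst_nonneg ξ)
  · push Not at hne
    have hzero : interpC ξ f s = 0 :=
      Finset.sum_eq_zero fun ν _ => by rw [hne (ξ ν) (hξ ν), zero_mul]
    rw [hzero, norm_zero]
    exact mul_nonneg (lebesgueConst_nonneg ξ) hM

end Lebesgue

section Box
variable {n : ℕ}

lemma euclNorm_nonneg (x : Fin n → ℝ) : 0 ≤ euclNorm x := Real.sqrt_nonneg _

@[fun_prop]
lemma continuous_euclNorm : Continuous (euclNorm (n := n)) := by
  unfold euclNorm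
  fun_prop

lemma euclNorm_neg (x : Fin n → ℝ) : euclNorm (-x) = euclNorm x := by
  simp [euclNorm]

lemma euclNorm_single (ι : Fin n) (v : ℝ) : euclNorm (Pi.single ι v) = |v| := by
  rw [euclNorm, ← Real.sqrt_sq_eq_abs]
  congr 1
  rw [Finset.sum_eq_single ι (fun j _ hj => by simp [hj]) (by simp)]
  simp

lemma phiAB_mem {a b : ℝ} (hab : a ≤ b) {t : ℝ} (ht : t ∈ Icc (-1 : ℝ) 1) :
    phiAB a b t ∈ Icc a b := by
  obtain ⟨h₁, h₂⟩ := ht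
  constructor <;> (rw [phiAB]; nlinarith)

lemma phiInvAB_mem {a b : ℝ} (hab : a ≤ b) {x : ℝ} (hx : x ∈ Icc a b) :
    phiInvAB a b x ∈ Icc (-1 : ℝ) 1 := by
  obtain ⟨h₁, h₂⟩ := hx
  rcases hab.eq_or_lt with rfl | hlt
  · simp [phiInvAB]
  · rw [phiInvAB, mem_Icc, le_div_iff₀ (by linarith), div_le_one (by linarith)]
    constructor <;> linarith

lemma phiAB_phiInvAB {a b : ℝ} (hab : a ≤ b) {x : ℝ} (hx : x ∈ Icc a b) :
    phiAB a b (phiInvAB a b x) = x := by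
  rcases hab.eq_or_lt with rfl | hlt
  · simp [phiAB, phiInvAB, le_antisymm hx.2 hx.1]
  · rw [phiAB, phiInvAB]
    field_simp [(sub_pos.mpr hlt).ne']
    ring

lemma continuous_phiAB (a b : ℝ) : Continuous (phiAB a b) := by
  unfold phiAB
  fun_prop

lemma update_phiAB_eq_add_smul (u a b : Fin n → ℝ) (ι : Fin n) (s : ℝ) :
    update u ι (phiAB (a ι) (b ι) s) =
      update u ι ((b ι + a ι) / 2) + s • Pi.single ι ((b ι - a ι) / 2) := by
  funext j
  rcases eq_or_ne j ι with rfl | hj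
  · simp [phiAB]
    ring
  · simp [hj]

lemma update_mem_boxSet {a b u : Fin n → ℝ} (hu : u ∈ boxSet a b) {ι : Fin n} {t : ℝ}
    (ht : t ∈ Icc (a ι) (b ι)) : update u ι t ∈ boxSet a b := by
  intro j
  rcases eq_or_ne j ι with rfl | hj
  · simpa using ht
  · simpa [hj] using hu j

lemma tail_mem_boxSet {a b u : Fin (n + 1) → ℝ} (hu : u ∈ boxSet a b) :
    Fin.tail u ∈ boxSet (Fin.tail a) (Fin.tail b) :=
  fun i => hu i.succ

lemma cons_mem_boxSet {a b : Fin (n + 1) → ℝ} {t : ℝ} {v : Fin n → ℝ}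
    (ht : t ∈ Icc (a 0) (b 0)) (hv : v ∈ boxSet (Fin.tail a) (Fin.tail b)) :
    Fin.cons t v ∈ boxSet a b := by
  intro ι
  refine Fin.cases ?_ (fun i => ?_) ι
  · simpa using ht
  · simpa [Fin.tail] using hv i

lemma xiPoint_mem_boxSet {m : ℕ} {ξ : Fin (m + 1) → ℝ} (hξ : ∀ ν, ξ ν ∈ Icc (-1 : ℝ) 1)
    {a b : Fin n → ℝ} (hab : ∀ ι, a ι ≤ b ι) (ν : Fin n → Fin (m + 1)) :
    xiPoint ξ a b ν ∈ boxSet a b :=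
  fun ι => phiAB_mem (hab ι) (hξ (ν ι))

lemma xiPoint_cons {m : ℕ} (ξ : Fin (m + 1) → ℝ) (a b : Fin (n + 1) → ℝ) (ν₀ : Fin (m + 1))
    (ν : Fin n → Fin (m + 1)) :
    xiPoint ξ a b (Fin.cons ν₀ ν) =
      Fin.cons (phiAB (a 0) (b 0) (ξ ν₀)) (xiPoint ξ (Fin.tail a) (Fin.tail b) ν) := by
  funext i
  refine Fin.cases ?_ (fun j => ?_) i <;> simp [xiPoint, Fin.tail]

lemma ContinuousOn.comp_cons {a b : Fin (n + 1) → ℝ} {H : (Fin (n + 1) → ℝ) → ℂ}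
    (hH : ContinuousOn H (boxSet a b)) {t : ℝ} (ht : t ∈ Icc (a 0) (b 0)) :
    ContinuousOn (fun v => H (Fin.cons t v)) (boxSet (Fin.tail a) (Fin.tail b)) :=
  hH.comp (by fun_prop) fun _ hv => cons_mem_boxSet ht hv

lemma ContinuousOn.comp_cons_phiAB {a b : Fin (n + 1) → ℝ} (hab : a 0 ≤ b 0)
    {H : (Fin (n + 1) → ℝ) → ℂ} (hH : ContinuousOn H (boxSet a b)) {v : Fin n → ℝ}
    (hv : v ∈ boxSet (Fin.tail a) (Fin.tail b)) :
    ContinuousOn (fun t => H (Fin.cons (phiAB (a 0) (b 0) t) v)) (Icc (-1) 1) :=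
  hH.comp ((continuous_phiAB _ _).finCons continuous_const).continuousOn
    fun _ ht => cons_mem_boxSet (phiAB_mem hab ht) hv

lemma sub_le_euclDiam_boxSet {a b : Fin n → ℝ} (hab : ∀ ι, a ι ≤ b ι) (ι : Fin n) :
    b ι - a ι ≤ euclDiam (boxSet a b) := by
  have ha : a ∈ boxSet a b := fun j => ⟨le_rfl, hab j⟩
  refine le_csSup ⟨euclNorm (b - a), ?_⟩
    ⟨update a ι (b ι), update_mem_boxSet ha ⟨hab ι, le_rfl⟩, a, ha, ?_⟩
  · rintro _ ⟨x, hx, y, hy, rfl⟩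
    refine Real.sqrt_le_sqrt (Finset.sum_le_sum fun j _ => ?_)
    obtain ⟨⟨hx₁, hx₂⟩, ⟨hy₁, hy₂⟩⟩ := And.intro (hx j) (hy j)
    simp only [Pi.sub_apply]
    nlinarith
  · have hdiff : update a ι (b ι) - a = Pi.single ι (b ι - a ι) := by
      funext j
      rcases eq_or_ne j ι with rfl | hj
      · simp
      · simp [hj]
    rw [hdiff, euclNorm_single, abs_of_nonneg (sub_nonneg.mpr (hab ι))]

lemma euclSetDist_le {s t : Set (Fin n → ℝ)} {x y : Fin n → ℝ} (hx : x ∈ s) (hy : y ∈ t) :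
    euclSetDist s t ≤ euclNorm (x - y) :=
  csInf_le ⟨0, by rintro _ ⟨x', -, y', -, rfl⟩; exact euclNorm_nonneg _⟩ ⟨x, hx, y, hy, rfl⟩

end Box

section Tensor
variable {m : ℕ} (ξ : Fin (m + 1) → ℝ) {n : ℕ}

/-- The tensor interpolation operator `𝕀_B` on the box `B = [a₁,b₁] × ⋯ × [a_n,b_n]`. -/
noncomputable def tensorInterp (a b : Fin n → ℝ) (H : (Fin n → ℝ) → ℂ) (u : Fin n → ℝ) : ℂ :=
  ∑ ν, H (xiPoint ξ a b ν) * lagTensor ξ a b ν u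

def CoordLineInterpErrorLE (a b : Fin n → ℝ) (H : (Fin n → ℝ) → ℂ) (ε : ℝ) : Prop :=
  ∀ ι, ∀ u ∈ boxSet a b, ∀ t ∈ Icc (-1 : ℝ) 1,
    ‖H (update u ι (phiAB (a ι) (b ι) t)) -
      interpC ξ (fun s => H (update u ι (phiAB (a ι) (b ι) s))) t‖ ≤ ε

lemma tensorInterp_sub (a b : Fin n → ℝ) (F G : (Fin n → ℝ) → ℂ) (u : Fin n → ℝ) :
    tensorInterp ξ a b (fun v => F v - G v) u =
      tensorInterp ξ a b F u - tensorInterp ξ a b G u := by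
  simp only [tensorInterp, ← Finset.sum_sub_distrib, sub_mul]

lemma tensorInterp_fin_zero (a b : Fin 0 → ℝ) (H : (Fin 0 → ℝ) → ℂ) (u : Fin 0 → ℝ) :
    tensorInterp ξ a b H u = H u := by
  simp [tensorInterp, lagTensor, Subsingleton.elim (xiPoint ξ a b _) u]

lemma tensorInterp_succ (a b : Fin (n + 1) → ℝ) (H : (Fin (n + 1) → ℝ) → ℂ)
    (u : Fin (n + 1) → ℝ) :
    tensorInterp ξ a b H u =
      interpC ξ (fun t => tensorInterp ξ (Fin.tail a) (Fin.tail b)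
        (fun v => H (Fin.cons (phiAB (a 0) (b 0) t) v)) (Fin.tail u))
        (phiInvAB (a 0) (b 0) (u 0)) := by
  rw [tensorInterp, interpC, ← (Fin.consEquiv fun _ => Fin (m + 1)).sum_comp,
    Fintype.sum_prod_type]
  refine Finset.sum_congr rfl fun ν₀ _ => ?_
  rw [tensorInterp, Finset.sum_mul]
  refine Finset.sum_congr rfl fun ν _ => ?_
  simp only [Fin.consEquiv, Equiv.coe_fn_mk, xiPoint_cons, lagTensor, Fin.prod_univ_succ,
    Fin.cons_zero, Fin.cons_succ, Fin.tail]
  ring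

lemma continuousOn_tensorInterp_cons {a b : Fin (n + 1) → ℝ} (hξ : ∀ ν, ξ ν ∈ Icc (-1 : ℝ) 1)
    (hab : ∀ ι, a ι ≤ b ι) {H : (Fin (n + 1) → ℝ) → ℂ} (hH : ContinuousOn H (boxSet a b))
    (w : Fin n → ℝ) :
    ContinuousOn (fun t => tensorInterp ξ (Fin.tail a) (Fin.tail b)
      (fun v => H (Fin.cons (phiAB (a 0) (b 0) t) v)) w) (Icc (-1) 1) :=
  continuousOn_finsetSum _ fun ν _ => ContinuousOn.mul
    (hH.comp_cons_phiAB (hab 0) (xiPoint_mem_boxSet hξ (fun i => hab i.succ) ν)) continuousOn_const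

lemma CoordLineInterpErrorLE.comp_cons {a b : Fin (n + 1) → ℝ} {H : (Fin (n + 1) → ℝ) → ℂ}
    {ε : ℝ} (hH : CoordLineInterpErrorLE ξ a b H ε) {t : ℝ} (ht : t ∈ Icc (a 0) (b 0)) :
    CoordLineInterpErrorLE ξ (Fin.tail a) (Fin.tail b) (fun v => H (Fin.cons t v)) ε := by
  intro i v hv s hs
  simpa only [Fin.cons_update, Fin.tail] using hH i.succ _ (cons_mem_boxSet ht hv) s hs

variable (hξ : ∀ ν, ξ ν ∈ Icc (-1 : ℝ) 1)
include hξ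

lemma norm_tensorInterp_le {a b : Fin n → ℝ} (hab : ∀ ι, a ι ≤ b ι)
    {G : (Fin n → ℝ) → ℂ} (hG : ContinuousOn G (boxSet a b)) {M : ℝ}
    (hGM : ∀ v ∈ boxSet a b, ‖G v‖ ≤ M) {u : Fin n → ℝ} (hu : u ∈ boxSet a b) :
    ‖tensorInterp ξ a b G u‖ ≤ lebesgueConst ξ ^ n * M := by
  induction n with
  | zero => simpa [tensorInterp_fin_zero] using hGM u hu
  | succ n ih =>
    rw [tensorInterp_succ, pow_succ', mul_assoc]
    refine norm_interpC_le ξ hξ (continuousOn_tensorInterp_cons ξ hξ hab hG _)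
      (fun t ht => ?_) (phiInvAB_mem (hab 0) (hu 0))
    have ht' := phiAB_mem (hab 0) ht
    exact ih (fun i => hab i.succ) (hG.comp_cons ht') (fun v hv => hGM _ (cons_mem_boxSet ht' hv))
      (tail_mem_boxSet hu)

lemma norm_sub_tensorInterp_le {a b : Fin n → ℝ} (hab : ∀ ι, a ι ≤ b ι)
    {H : (Fin n → ℝ) → ℂ} (hH : ContinuousOn H (boxSet a b)) {ε : ℝ}
    (hline : CoordLineInterpErrorLE ξ a b H ε) {u : Fin n → ℝ} (hu : u ∈ boxSet a b) :
    ‖H u - tensorInterp ξ a b H u‖ ≤ (∑ k ∈ Finset.range n, lebesgueConst ξ ^ k) * ε := by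
  induction n with
  | zero => simp [tensorInterp_fin_zero]
  | succ n ih =>
    set s₀ := phiInvAB (a 0) (b 0) (u 0)
    have hs₀ : s₀ ∈ Icc (-1 : ℝ) 1 := phiInvAB_mem (hab 0) (hu 0)
    set g : ℝ → ℂ := fun t => H (Fin.cons (phiAB (a 0) (b 0) t) (Fin.tail u))
    set f : ℝ → ℂ := fun t => tensorInterp ξ (Fin.tail a) (Fin.tail b)
      (fun v => H (Fin.cons (phiAB (a 0) (b 0) t) v)) (Fin.tail u)
    have hupdate : ∀ x, update u 0 x = Fin.cons x (Fin.tail u) := fun x => by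
      conv_lhs => rw [← Fin.cons_self_tail u]
      exact Fin.update_cons_zero _ _ _
    -- line error in the first variable, plus `𝕀` applied to the error in the other `n`
    have hsplit : H u - tensorInterp ξ a b H u =
        (g s₀ - interpC ξ g s₀) + interpC ξ (fun t => g t - f t) s₀ := by
      have hgs₀ : g s₀ = H u := by
        simp only [g, s₀, phiAB_phiInvAB (hab 0) (hu 0), Fin.cons_self_tail]
      rw [interpC_sub, tensorInterp_succ, hgs₀]
      ring
    have hfirst : ‖g s₀ - interpC ξ g s₀‖ ≤ ε := by
      simpa only [hupdate] using hline 0 u hu s₀ hs₀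
    have hrest : ∀ t ∈ Icc (-1 : ℝ) 1,
        ‖g t - f t‖ ≤ (∑ k ∈ Finset.range n, lebesgueConst ξ ^ k) * ε := fun t ht =>
      ih (fun i => hab i.succ) (hH.comp_cons (phiAB_mem (hab 0) ht))
        (hline.comp_cons ξ (phiAB_mem (hab 0) ht)) (tail_mem_boxSet hu)
    have hcont : ContinuousOn (fun t => g t - f t) (Icc (-1) 1) :=
      (hH.comp_cons_phiAB (hab 0) (tail_mem_boxSet hu)).sub
        (continuousOn_tensorInterp_cons ξ hξ hab hH _)
    calc ‖H u - tensorInterp ξ a b H u‖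
        ≤ ε + lebesgueConst ξ * ((∑ k ∈ Finset.range n, lebesgueConst ξ ^ k) * ε) := by
          rw [hsplit]
          exact (norm_add_le _ _).trans (add_le_add hfirst (norm_interpC_le ξ hξ hcont hrest hs₀))
      _ = (∑ k ∈ Finset.range (n + 1), lebesgueConst ξ ^ k) * ε := by
          rw [geom_sum_succ]
          ring

end Tensor

section Product
variable {m : ℕ} (ξ : Fin (m + 1) → ℝ) (hξ : ∀ ν, ξ ν ∈ Icc (-1 : ℝ) 1)
include hξ

lemma norm_sub_tensorInterp_tensorInterp_le {n₁ n₂ : ℕ} {a₁ b₁ : Fin n₁ → ℝ}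
    {a₂ b₂ : Fin n₂ → ℝ} (hab₁ : ∀ ι, a₁ ι ≤ b₁ ι) (hab₂ : ∀ ι, a₂ ι ≤ b₂ ι)
    {F : (Fin n₁ → ℝ) → (Fin n₂ → ℝ) → ℂ}
    (hF₁ : ∀ y ∈ boxSet a₂ b₂, ContinuousOn (F · y) (boxSet a₁ b₁))
    (hF₂ : ∀ x ∈ boxSet a₁ b₁, ContinuousOn (F x) (boxSet a₂ b₂)) {ε : ℝ}
    (hline₁ : ∀ y ∈ boxSet a₂ b₂, CoordLineInterpErrorLE ξ a₁ b₁ (F · y) ε)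
    (hline₂ : ∀ x ∈ boxSet a₁ b₁, CoordLineInterpErrorLE ξ a₂ b₂ (F x) ε)
    {x : Fin n₁ → ℝ} {y : Fin n₂ → ℝ} (hx : x ∈ boxSet a₁ b₁) (hy : y ∈ boxSet a₂ b₂) :
    ‖F x y - tensorInterp ξ a₁ b₁ (fun x' => tensorInterp ξ a₂ b₂ (F x') y) x‖ ≤
      (∑ k ∈ Finset.range (n₁ + n₂), lebesgueConst ξ ^ k) * ε := by
  set Λ := lebesgueConst ξ
  have hsplit : F x y - tensorInterp ξ a₁ b₁ (fun x' => tensorInterp ξ a₂ b₂ (F x') y) x =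
      (F x y - tensorInterp ξ a₁ b₁ (F · y) x) +
        tensorInterp ξ a₁ b₁ (fun x' => F x' y - tensorInterp ξ a₂ b₂ (F x') y) x := by
    rw [tensorInterp_sub]
    ring
  have hcont : ContinuousOn (fun x' => tensorInterp ξ a₂ b₂ (F x') y) (boxSet a₁ b₁) :=
    continuousOn_finsetSum _ fun μ _ =>
      (hF₁ _ (xiPoint_mem_boxSet hξ hab₂ μ)).mul continuousOn_const
  have hinner : ‖tensorInterp ξ a₁ b₁ (fun x' => F x' y - tensorInterp ξ a₂ b₂ (F x') y) x‖ ≤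
      Λ ^ n₁ * ((∑ k ∈ Finset.range n₂, Λ ^ k) * ε) :=
    norm_tensorInterp_le ξ hξ hab₁ ((hF₁ y hy).sub hcont)
      (fun x' hx' => norm_sub_tensorInterp_le ξ hξ hab₂ (hF₂ x' hx') (hline₂ x' hx') hy) hx
  calc _ ≤ (∑ k ∈ Finset.range n₁, Λ ^ k) * ε +
        Λ ^ n₁ * ((∑ k ∈ Finset.range n₂, Λ ^ k) * ε) := by
        rw [hsplit]
        exact (norm_add_le _ _).trans
          (add_le_add (norm_sub_tensorInterp_le ξ hξ hab₁ (hF₁ y hy) (hline₁ y hy) hx) hinner)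
    _ = (∑ k ∈ Finset.range (n₁ + n₂), Λ ^ k) * ε := by
        rw [Finset.sum_range_add]
        simp only [pow_add, ← Finset.mul_sum]
        ring

end Product

lemma sum_range_pow_le_mul_pow {a : ℝ} (ha : 1 ≤ a) (n : ℕ) :
    ∑ k ∈ Finset.range n, a ^ k ≤ n * a ^ (n - 1) :=
  calc ∑ k ∈ Finset.range n, a ^ k ≤ ∑ _k ∈ Finset.range n, a ^ (n - 1) :=
        Finset.sum_le_sum fun k hk =>
          pow_le_pow_right₀ ha (Nat.le_sub_one_of_lt (Finset.mem_range.mp hk))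
    _ = n * a ^ (n - 1) := by simp

section Kernel
variable {n : ℕ}

/-- The directional kernel `g(x,y)·exp(−iκ⟨x−y,c⟩)` as a function of `w = x − y`. -/
noncomputable def dirKernel (κ : ℝ) (c w : Fin n → ℝ) : ℂ :=
  exp (I * κ * ((euclNorm w - ∑ j, w j * c j : ℝ) : ℂ)) / (4 * Real.pi * (euclNorm w : ℂ))

lemma continuousOn_dirKernel (κ : ℝ) (c : Fin n → ℝ) :
    ContinuousOn (dirKernel κ c) {w | euclNorm w ≠ 0} := by
  refine ContinuousOn.div (by fun_prop) (by fun_prop) fun w hw => ?_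
  exact mul_ne_zero (by simp [Real.pi_ne_zero]) (by exact_mod_cast hw)

/-- The hypothesis on the functions `g_dp` of the theorem, read pointwise in `t`. -/
def SegmentInterpErrorLE {m : ℕ} (ξ : Fin (m + 1) → ℝ) (K : (Fin n → ℝ) → ℂ)
    (S : Set (Fin n → ℝ)) (D ε : ℝ) : Prop :=
  ∀ d p : Fin n → ℝ, 2 * euclNorm p ≤ D → (∀ t ∈ Icc (-1 : ℝ) 1, d - t • p ∈ S) →
    ∀ t ∈ Icc (-1 : ℝ) 1, ‖K (d - t • p) - interpC ξ (fun s => K (d - s • p)) t‖ ≤ ε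

variable {m : ℕ} {ξ : Fin (m + 1) → ℝ} {K : (Fin n → ℝ) → ℂ} {S : Set (Fin n → ℝ)} {D ε : ℝ}
  {a b : Fin n → ℝ}

lemma SegmentInterpErrorLE.coordLine_sub_right (hK : SegmentInterpErrorLE ξ K S D ε)
    (hab : ∀ ι, a ι ≤ b ι) (hD : ∀ ι, b ι - a ι ≤ D) {y : Fin n → ℝ}
    (hS : ∀ x ∈ boxSet a b, x - y ∈ S) :
    CoordLineInterpErrorLE ξ a b (fun x => K (x - y)) ε := by
  intro ι u hu t ht
  have hseg : ∀ s, update u ι (phiAB (a ι) (b ι) s) - y =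
      (update u ι ((b ι + a ι) / 2) - y) - s • -Pi.single ι ((b ι - a ι) / 2) := fun s => by
    rw [update_phiAB_eq_add_smul]
    module
  simp only [hseg]
  refine hK _ _ ?_ (fun s hs => ?_) t ht
  · rw [euclNorm_neg, euclNorm_single, abs_of_nonneg (by linarith [hab ι])]
    linarith [hD ι]
  · rw [← hseg]
    exact hS _ (update_mem_boxSet hu (phiAB_mem (hab ι) hs))

lemma SegmentInterpErrorLE.coordLine_sub_left (hK : SegmentInterpErrorLE ξ K S D ε)
    (hab : ∀ ι, a ι ≤ b ι) (hD : ∀ ι, b ι - a ι ≤ D) {x : Fin n → ℝ}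
    (hS : ∀ y ∈ boxSet a b, x - y ∈ S) :
    CoordLineInterpErrorLE ξ a b (fun y => K (x - y)) ε := by
  intro ι u hu t ht
  have hseg : ∀ s, x - update u ι (phiAB (a ι) (b ι) s) =
      (x - update u ι ((b ι + a ι) / 2)) - s • Pi.single ι ((b ι - a ι) / 2) := fun s => by
    rw [update_phiAB_eq_add_smul]
    module
  simp only [hseg]
  refine hK _ _ ?_ (fun s hs => ?_) t ht
  · rw [euclNorm_single, abs_of_nonneg (by linarith [hab ι])]
    linarith [hD ι]
  · rw [← hseg]
    exact hS _ (update_mem_boxSet hu (phiAB_mem (hab ι) hs))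

end Kernel

lemma helmholtz3Dc_eq_dirKernel (κ : ℝ) (c x y : Fin 3 → ℝ) :
    helmholtz3Dc κ c x y = dirKernel κ c (x - y) := by
  rw [helmholtz3Dc, helmholtz3D, dirKernel, div_mul_eq_mul_div, ← exp_add]
  simp only [Pi.sub_apply]
  push_cast
  ring_nf

lemma norm_helmholtz3D_sub_gTilde (m : ℕ) (ξ : Fin (m + 1) → ℝ) (κ : ℝ)
    (c aτ bτ aσ bσ x y : Fin 3 → ℝ) :
    ‖helmholtz3D κ x y - gTilde m ξ κ c aτ bτ aσ bσ x y‖ =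
      ‖dirKernel κ c (x - y) - tensorInterp ξ aτ bτ
        (fun x' => tensorInterp ξ aσ bσ (fun y' => dirKernel κ c (x' - y')) y) x‖ := by
  set wave := exp (I * κ * ((∑ j, (x j - y j) * c j : ℝ) : ℂ)) with hwave_def
  have hg : helmholtz3D κ x y = wave * dirKernel κ c (x - y) := by
    rw [← helmholtz3Dc_eq_dirKernel, helmholtz3Dc, mul_left_comm, ← exp_add, add_neg_cancel,
      exp_zero, mul_one]
  have hgt : gTilde m ξ κ c aτ bτ aσ bσ x y = wave * tensorInterp ξ aτ bτ
      (fun x' => tensorInterp ξ aσ bσ (fun y' => dirKernel κ c (x' - y')) y) x := by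
    rw [gTilde, tensorInterp]
    congr 1
    refine Finset.sum_congr rfl fun ν _ => ?_
    rw [tensorInterp, Finset.sum_mul]
    refine Finset.sum_congr rfl fun μ _ => ?_
    rw [helmholtz3Dc_eq_dirKernel]
    ring
  have hwave : ‖wave‖ = 1 := by rw [hwave_def, mul_assoc, ← ofReal_mul, norm_exp_I_mul_ofReal]
  rw [hg, hgt, ← mul_sub, norm_mul, hwave, one_mul]

theorem stmt12_general (ε κ : ℝ) (hε : 0 ≤ ε) (c : Fin 3 → ℝ)
    (m : ℕ) (ξ : Fin (m + 1) → ℝ)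
    (hξ : ∀ ν, ξ ν ∈ Set.Icc (-1 : ℝ) 1) (hinj : Function.Injective ξ)
    (aτ bτ aσ bσ : Fin 3 → ℝ) (haτ : ∀ ι, aτ ι ≤ bτ ι) (haσ : ∀ ι, aσ ι ≤ bσ ι)
    (τ σ : Set (Fin 3 → ℝ)) (hτ : τ = boxSet aτ bτ) (hσ : σ = boxSet aσ bσ)
    (hdist : 0 < euclSetDist τ σ)
    (hunivariate : ∀ d p : Fin 3 → ℝ,
      2 * euclNorm p ≤ max (euclDiam τ) (euclDiam σ) →
      (∀ t ∈ Set.Icc (-1 : ℝ) 1, ∃ x ∈ τ, ∃ y ∈ σ, d - t • p = x - y) →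
      supNormOn (fun t =>
          Complex.exp (Complex.I * (κ : ℂ) *
              ((euclNorm (d - t • p) - ∑ j, (d j - t * p j) * c j : ℝ) : ℂ)) /
              (4 * (Real.pi : ℂ) * (euclNorm (d - t • p) : ℂ)) -
          interpC ξ (fun s =>
            Complex.exp (Complex.I * (κ : ℂ) *
              ((euclNorm (d - s • p) - ∑ j, (d j - s * p j) * c j : ℝ) : ℂ)) /
              (4 * (Real.pi : ℂ) * (euclNorm (d - s • p) : ℂ))) t)
        (Set.Icc (-1) 1) ≤ ε) :
    ∀ x ∈ τ, ∀ y ∈ σ,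
      ‖helmholtz3D κ x y - gTilde m ξ κ c aτ bτ aσ bσ x y‖ ≤
        6 * (lebesgueConst ξ) ^ 5 * ε := by
  subst hτ hσ
  intro x hx y hy
  set S : Set (Fin 3 → ℝ) := {w | ∃ x ∈ boxSet aτ bτ, ∃ y ∈ boxSet aσ bσ, w = x - y}
  have hS : ∀ x' ∈ boxSet aτ bτ, ∀ y' ∈ boxSet aσ bσ, x' - y' ∈ S :=
    fun x' hx' y' hy' => ⟨x', hx', y', hy', rfl⟩
  have hS_ne : ∀ w ∈ S, euclNorm w ≠ 0 := by
    rintro _ ⟨x', hx', y', hy', rfl⟩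
    exact (hdist.trans_le (euclSetDist_le hx' hy')).ne'
  set D := max (euclDiam (boxSet aτ bτ)) (euclDiam (boxSet aσ bσ))
  have hseg : SegmentInterpErrorLE ξ (dirKernel κ c) S D ε := fun d p hp hdp t ht =>
    (norm_le_supNormOn isCompact_Icc (((continuousOn_dirKernel κ c).comp (by fun_prop)
      fun s hs => hS_ne _ (hdp s hs)).sub (continuous_interpC ξ _).continuousOn) ht).trans
      (hunivariate d p hp hdp)
  have hDτ ι : bτ ι - aτ ι ≤ D := (sub_le_euclDiam_boxSet haτ ι).trans (le_max_left _ _)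
  have hDσ ι : bσ ι - aσ ι ≤ D := (sub_le_euclDiam_boxSet haσ ι).trans (le_max_right _ _)
  rw [norm_helmholtz3D_sub_gTilde]
  calc _ ≤ (∑ k ∈ Finset.range (3 + 3), lebesgueConst ξ ^ k) * ε :=
        norm_sub_tensorInterp_tensorInterp_le ξ hξ haτ haσ
          (fun y' hy' => (continuousOn_dirKernel κ c).comp (continuous_sub_right y').continuousOn
            fun x' hx' => hS_ne _ (hS x' hx' y' hy'))
          (fun x' hx' => (continuousOn_dirKernel κ c).comp (continuous_sub_left x').continuousOn
            fun y' hy' => hS_ne _ (hS x' hx' y' hy'))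
          (fun y' hy' => hseg.coordLine_sub_right haτ hDτ fun x' hx' => hS x' hx' y' hy')
          (fun x' hx' => hseg.coordLine_sub_left haσ hDσ fun y' hy' => hS x' hx' y' hy') hx hy
    _ ≤ 6 * lebesgueConst ξ ^ 5 * ε := mul_le_mul_of_nonneg_right
        (by simpa using sum_range_pow_le_mul_pow (one_le_lebesgueConst ξ hξ hinj) 6) hε

/-- univariate formulation for `g`: if all the univariate functions
`g_dp` are interpolated with accuracy `ε` on `[−1,1]`, then the directional
approximation error satisfies `‖g − g̃_{τσ}‖_{∞,τ×σ} ≤ 6 Λ_m⁵ ε`. -/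
theorem stmt12 (ε κ : ℝ) (hε : 0 ≤ ε) (hκ : 0 ≤ κ) (c : Fin 3 → ℝ)
    (m : ℕ) (ξ : Fin (m + 1) → ℝ)
    (hξ : ∀ ν, ξ ν ∈ Set.Icc (-1 : ℝ) 1) (hinj : Function.Injective ξ)
    (aτ bτ aσ bσ : Fin 3 → ℝ) (haτ : ∀ ι, aτ ι ≤ bτ ι) (haσ : ∀ ι, aσ ι ≤ bσ ι)
    (τ σ : Set (Fin 3 → ℝ)) (hτ : τ = boxSet aτ bτ) (hσ : σ = boxSet aσ bσ)
    (hdist : 0 < euclSetDist τ σ)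
    (hunivariate : ∀ d p : Fin 3 → ℝ,
      2 * euclNorm p ≤ max (euclDiam τ) (euclDiam σ) →
      (∀ t ∈ Set.Icc (-1 : ℝ) 1, ∃ x ∈ τ, ∃ y ∈ σ, d - t • p = x - y) →
      supNormOn (fun t =>
          Complex.exp (Complex.I * (κ : ℂ) *
              ((euclNorm (d - t • p) - ∑ j, (d j - t * p j) * c j : ℝ) : ℂ)) /
              (4 * (Real.pi : ℂ) * (euclNorm (d - t • p) : ℂ)) -
          interpC ξ (fun s =>
            Complex.exp (Complex.I * (κ : ℂ) *
              ((euclNorm (d - s • p) - ∑ j, (d j - s * p j) * c j : ℝ) : ℂ)) /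
              (4 * (Real.pi : ℂ) * (euclNorm (d - s • p) : ℂ))) t)
        (Set.Icc (-1) 1) ≤ ε) :
    ∀ x ∈ τ, ∀ y ∈ σ,
      ‖helmholtz3D κ x y - gTilde m ξ κ c aτ bτ aσ bσ x y‖ ≤
        6 * (lebesgueConst ξ) ^ 5 * ε :=
  stmt12_general ε κ hε c m ξ hξ hinj aτ bτ aσ bσ haτ haσ τ σ hτ hσ hdist hunivariate
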